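/- For all l, i ∈ {1,…,n−1} and every m ∈ ℕ, the operators on A satisfy [ζ_l, η_i^m] = −m · a_{l,i} · η_i^m, where a_{l,i} is the (l,i) entry of the Cartan matrix of sl(n): a_{l,l} = 2, a_{l,i} = −1 if |l−i| = 1, and a_{l,i} = 0 otherwise. -/

import Mathlib

open MvPolynomial LieAlgebra LieAlgebra.SpecialLinear

/-- Index set for the variables `x_{i,j}`, `1 ≤ j < i ≤ n`. -/
abbrev XIdx (n : ℕ) := {p : ℕ × ℕ // 1 ≤ p.2 ∧ p.2 < p.1 ∧ p.1 ≤ n}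

/-- The polynomial algebra `A = ℂ[x_{i,j} : 1 ≤ j < i ≤ n]`. -/
abbrev PolyA (n : ℕ) := MvPolynomial (XIdx n) ℂ

/-- Multiplication by `x_{i,j}` as a linear operator on `A`. -/
noncomputable def mulX (n i j : ℕ) : Module.End ℂ (PolyA n) :=
  if h : 1 ≤ j ∧ j < i ∧ i ≤ n then
    LinearMap.mulLeft ℂ (X (⟨(i, j), h⟩ : XIdx n)) else 0

/-- Partial derivative `∂_{i,j}` as a linear operator on `A`. -/
noncomputable def pd (n i j : ℕ) : Module.End ℂ (PolyA n) :=
  if h : 1 ≤ j ∧ j < i ∧ i ≤ n then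
    (pderiv (⟨(i, j), h⟩ : XIdx n)).toLinearMap else 0

/-- The operator `d_i`. -/
noncomputable def dOp (n : ℕ) (lam : ℕ → ℂ) (i : ℕ) : Module.End ℂ (PolyA n) :=
  (lam i • (1 : Module.End ℂ (PolyA n))
      - ∑ j ∈ Finset.Icc (i+1) n, mulX n j i * pd n j i
      + ∑ j ∈ Finset.Icc (i+2) n, mulX n j (i+1) * pd n j (i+1)) * pd n (i+1) i
    + ∑ j ∈ Finset.Icc 1 (i-1), mulX n i j * pd n (i+1) j
    - ∑ j ∈ Finset.Icc (i+2) n, mulX n j (i+1) * pd n j i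

/-- The operator `η_i`. -/
noncomputable def etaOp (n : ℕ) (i : ℕ) : Module.End ℂ (PolyA n) :=
  mulX n (i+1) i + ∑ j ∈ Finset.Icc 1 (i-1), mulX n (i+1) j * pd n i j

/-- The operator `ζ_i`. -/
noncomputable def zetaOp (n : ℕ) (lam : ℕ → ℂ) (i : ℕ) : Module.End ℂ (PolyA n) :=
  lam i • (1 : Module.End ℂ (PolyA n))
    + ∑ p ∈ Finset.Icc 1 (i-1), (mulX n i p * pd n i p - mulX n (i+1) p * pd n (i+1) p)
    + ∑ j ∈ Finset.Icc (i+2) n, (mulX n j (i+1) * pd n j (i+1) - mulX n j i * pd n j i)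
    - (2 : ℂ) • (mulX n (i+1) i * pd n (i+1) i)

/-- The matrix unit `E_{i,j}` (1-based indices) as an element of `sl(n,ℂ)`. -/
noncomputable def slE (n i j : ℕ) : sl (Fin n) ℂ :=
  if h : i ≠ j ∧ 1 ≤ i ∧ i ≤ n ∧ 1 ≤ j ∧ j ≤ n then
    have hi : i - 1 < n := by omega
    have hj : j - 1 < n := by omega
    LieAlgebra.SpecialLinear.single (⟨i - 1, hi⟩ : Fin n) (⟨j - 1, hj⟩ : Fin n)
      (by simp only [ne_eq, Fin.mk.injEq]; omega) (1 : ℂ)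
  else 0

/-- `h_i = E_{i,i} - E_{i+1,i+1}` (1-based index) as an element of `sl(n,ℂ)`. -/
noncomputable def slH (n i : ℕ) : sl (Fin n) ℂ :=
  if h : 1 ≤ i ∧ i + 1 ≤ n then
    have hi : i - 1 < n := by omega
    have hi' : i < n := by omega
    ⟨Matrix.single (⟨i - 1, hi⟩ : Fin n) (⟨i - 1, hi⟩ : Fin n) (1 : ℂ)
        - Matrix.single (⟨i, hi'⟩ : Fin n) (⟨i, hi'⟩ : Fin n) (1 : ℂ),
      LinearMap.mem_ker.2 (by simp)⟩
  else 0

/-- The `(l,i)` entry of the Cartan matrix of `sl(n)`. -/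
noncomputable def cartan (l i : ℕ) : ℂ :=
  if l = i then 2 else if l = i + 1 ∨ i = l + 1 then -1 else 0

/-!
Both operators are built from the Euler operators `x_{a,b} ∂_{a,b}`, and
`[x_{a,b} ∂_{a,b}, x_{c,d}] = δ x_{c,d}`, `[x_{a,b} ∂_{a,b}, ∂_{c,d}] = -δ ∂_{c,d}`. Since
`ζ_l - λ_l` is a combination of Euler operators whose coefficient at `(a,b)` is the root
`ε_a - ε_b` evaluated at `h_l`, bracketing with `ζ_l` multiplies `x_{c,d}` by that value and
`∂_{c,d}` by its negative. Every term `x_{i+1,i}` and `x_{i+1,j} ∂_{i,j}` of `η_i` is thus an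
eigenvector with eigenvalue `(ε_{i+1} - ε_i)(h_l) = -a_{l,i}`, and `ad ζ_l` being a derivation
gives the power `η_i^m`.
-/

attribute [local instance] LieRing.ofAssociativeRing

theorem MvPolynomial.pderiv_pderiv_comm {σ R : Type*} [CommRing R] (i j : σ)
    (p : MvPolynomial σ R) : pderiv i (pderiv j p) = pderiv j (pderiv i p) := by
  classical
  have h : ⁅pderiv i, pderiv j⁆ = (0 : Derivation R (MvPolynomial σ R) (MvPolynomial σ R)) :=
    derivation_ext fun k => by
      rw [Derivation.commutator_apply]
      simp [pderiv_X, Pi.single_apply, apply_ite (pderiv _)]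
  simpa [Derivation.commutator_apply, sub_eq_zero] using congr($h p)

namespace Ring

variable {A : Type*} [Ring A]

theorem lie_mul (a b c : A) : ⁅a, b * c⁆ = ⁅a, b⁆ * c + b * ⁅a, c⁆ := by
  simp only [lie_def, mul_sub, sub_mul, mul_assoc]
  abel

theorem mul_lie (a b c : A) : ⁅a * b, c⁆ = a * ⁅b, c⁆ + ⁅a, c⁆ * b := by
  simp only [lie_def, mul_sub, sub_mul, mul_assoc]
  abel

theorem lie_pow_of_lie_eq_smul {R : Type*} [CommRing R] [Algebra R A] {a b : A} {r : R}
    (h : ⁅a, b⁆ = r • b) (m : ℕ) : ⁅a, b ^ m⁆ = (m * r) • b ^ m := by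
  induction m with
  | zero => simpa using (Commute.one_right a).lie_eq
  | succ m ih =>
    rw [pow_succ', lie_mul, h, ih, smul_mul_assoc, mul_smul_comm, ← add_smul]
    push_cast
    ring_nf

end Ring

section Operators

variable {n : ℕ}

theorem mulX_eq_zero {a b : ℕ} (h : ¬(1 ≤ b ∧ b < a ∧ a ≤ n)) : mulX n a b = 0 := by
  rw [mulX, dif_neg h]

theorem pd_eq_zero {a b : ℕ} (h : ¬(1 ≤ b ∧ b < a ∧ a ≤ n)) : pd n a b = 0 := by
  rw [pd, dif_neg h]

theorem commute_mulX_mulX (a b c d : ℕ) : Commute (mulX n a b) (mulX n c d) := by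
  unfold mulX
  split_ifs
  · exact LinearMap.ext fun p => mul_left_comm _ _ p
  all_goals simp

theorem commute_pd_pd (a b c d : ℕ) : Commute (pd n a b) (pd n c d) := by
  unfold pd
  split_ifs
  · exact LinearMap.ext fun p => pderiv_pderiv_comm _ _ p
  all_goals simp

theorem lie_pd_mulX_self {a b : ℕ} (h : 1 ≤ b ∧ b < a ∧ a ≤ n) : ⁅pd n a b, mulX n a b⁆ = 1 := by
  refine LinearMap.ext fun p => ?_
  simp [Ring.lie_def, pd, mulX, dif_pos h]

theorem lie_pd_mulX_of_ne {a b c d : ℕ} (h : (a, b) ≠ (c, d)) : ⁅pd n a b, mulX n c d⁆ = 0 := by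
  unfold pd mulX
  split_ifs with hab hcd
  · refine LinearMap.ext fun p => ?_
    have hne : (⟨(c, d), hcd⟩ : XIdx n) ≠ ⟨(a, b), hab⟩ := fun e => h (congrArg Subtype.val e).symm
    simp [Ring.lie_def, pderiv_X_of_ne hne]
  all_goals simp

noncomputable def eulerOp (n a b : ℕ) : Module.End ℂ (PolyA n) := mulX n a b * pd n a b

theorem lie_eulerOp_mulX (a b c d : ℕ) :
    ⁅eulerOp n a b, mulX n c d⁆ = (if a = c ∧ b = d then (1 : ℂ) else 0) • mulX n c d := by
  rw [eulerOp, Ring.mul_lie, (commute_mulX_mulX (n := n) a b c d).lie_eq, zero_mul, add_zero]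
  by_cases hab : a = c ∧ b = d
  · obtain ⟨rfl, rfl⟩ := hab
    by_cases h : 1 ≤ b ∧ b < a ∧ a ≤ n
    · rw [lie_pd_mulX_self h, mul_one, if_pos ⟨rfl, rfl⟩, one_smul]
    · simp [mulX_eq_zero h]
  · rw [lie_pd_mulX_of_ne (by simpa using hab), mul_zero, if_neg hab, zero_smul]

theorem lie_eulerOp_pd (a b c d : ℕ) :
    ⁅eulerOp n a b, pd n c d⁆ = (if a = c ∧ b = d then (-1 : ℂ) else 0) • pd n c d := by
  rw [eulerOp, Ring.mul_lie, (commute_pd_pd (n := n) a b c d).lie_eq, mul_zero, zero_add,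
    Ring.lie_def, ← neg_sub, ← Ring.lie_def]
  by_cases hab : a = c ∧ b = d
  · obtain ⟨rfl, rfl⟩ := hab
    by_cases h : 1 ≤ b ∧ b < a ∧ a ≤ n
    · rw [lie_pd_mulX_self h, if_pos ⟨rfl, rfl⟩]
      exact (neg_one_mul (pd n a b)).trans (neg_one_smul ℂ (pd n a b)).symm
    · simp [pd_eq_zero h]
  · rw [lie_pd_mulX_of_ne (by simpa [eq_comm] using hab), neg_zero, zero_mul, if_neg hab,
      zero_smul]

/-- Writing `ζ_l - λ_l = ∑ c_{a,b} x_{a,b} ∂_{a,b}`, this is `∑ c_{a,b} f a b`. -/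
noncomputable def zetaPairing (n l : ℕ) (f : ℕ → ℕ → ℂ) : ℂ :=
  ∑ p ∈ Finset.Icc 1 (l - 1), (f l p - f (l + 1) p)
    + ∑ j ∈ Finset.Icc (l + 2) n, (f j (l + 1) - f j l) - 2 * f (l + 1) l

/-- The root `ε_a - ε_b` evaluated at `h_l = E_{l,l} - E_{l+1,l+1}`. -/
def rootPairing (l a b : ℕ) : ℂ :=
  (if a = l then 1 else 0) - (if a = l + 1 then 1 else 0)
    - (if b = l then 1 else 0) + (if b = l + 1 then 1 else 0)

theorem zetaPairing_indicator {c d : ℕ} (hcd : 1 ≤ d ∧ d < c ∧ c ≤ n) (l : ℕ) (r : ℂ) :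
    zetaPairing n l (fun a b => if a = c ∧ b = d then r else 0) = r * rootPairing l c d := by
  simp only [zetaPairing, rootPairing, ite_and, Finset.sum_sub_distrib, Finset.sum_ite_irrel,
    Finset.sum_ite_eq', Finset.sum_const_zero, Finset.mem_Icc]
  split_ifs <;> first | omega | ring

theorem lie_zetaOp_of_lie_eulerOp (lam : ℕ → ℂ) (l : ℕ) {T : Module.End ℂ (PolyA n)}
    {f : ℕ → ℕ → ℂ} (hT : ∀ a b, ⁅eulerOp n a b, T⁆ = f a b • T) :
    ⁅zetaOp n lam l, T⁆ = zetaPairing n l f • T := by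
  have hsum : ∀ (s : Finset ℕ) (g h : ℕ → ℕ × ℕ),
      ⁅∑ x ∈ s, (eulerOp n (g x).1 (g x).2 - eulerOp n (h x).1 (h x).2), T⁆
        = (∑ x ∈ s, (f (g x).1 (g x).2 - f (h x).1 (h x).2)) • T := by
    intro s g h
    rw [sum_lie, Finset.sum_smul]
    refine Finset.sum_congr rfl fun x _ => ?_
    rw [sub_lie, hT, hT]
    exact (sub_smul ..).symm
  have h1 := hsum (Finset.Icc 1 (l - 1)) (fun p => (l, p)) (fun p => (l + 1, p))
  have h2 := hsum (Finset.Icc (l + 2) n) (fun j => (j, l + 1)) (fun j => (j, l))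
  simp only [eulerOp] at h1 h2 hT
  rw [zetaOp, sub_lie, add_lie, add_lie, h1, h2, smul_lie (R := ℂ) (L := Module.End ℂ (PolyA n)),
    smul_lie (R := ℂ) (L := Module.End ℂ (PolyA n)), hT, (Commute.one_left T).lie_eq, zetaPairing]
  module

theorem lie_zetaOp_mulX (lam : ℕ → ℂ) (l c d : ℕ) :
    ⁅zetaOp n lam l, mulX n c d⁆ = rootPairing l c d • mulX n c d := by
  by_cases hcd : 1 ≤ d ∧ d < c ∧ c ≤ n
  · rw [lie_zetaOp_of_lie_eulerOp lam l (lie_eulerOp_mulX · · c d), zetaPairing_indicator hcd,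
      one_mul]
  · simp [mulX_eq_zero hcd]

theorem lie_zetaOp_pd (lam : ℕ → ℂ) (l c d : ℕ) :
    ⁅zetaOp n lam l, pd n c d⁆ = (-rootPairing l c d) • pd n c d := by
  by_cases hcd : 1 ≤ d ∧ d < c ∧ c ≤ n
  · rw [lie_zetaOp_of_lie_eulerOp lam l (lie_eulerOp_pd · · c d), zetaPairing_indicator hcd,
      neg_one_mul]
  · simp [pd_eq_zero hcd]

theorem rootPairing_succ_sub (l i j : ℕ) :
    rootPairing l (i + 1) j - rootPairing l i j = -cartan l i := by
  simp only [rootPairing, cartan]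
  split_ifs <;> first | omega | ring

theorem lie_zetaOp_etaOp (lam : ℕ → ℂ) (l i : ℕ) :
    ⁅zetaOp n lam l, etaOp n i⁆ = (-cartan l i) • etaOp n i := by
  have hx : rootPairing l (i + 1) i = -cartan l i := by
    simpa [rootPairing] using rootPairing_succ_sub l i i
  rw [etaOp, lie_add, lie_zetaOp_mulX, hx, lie_sum, smul_add, Finset.smul_sum]
  congr 1
  refine Finset.sum_congr rfl fun j _ => ?_
  rw [Ring.lie_mul, lie_zetaOp_mulX, lie_zetaOp_pd, smul_mul_assoc, mul_smul_comm,
    ← rootPairing_succ_sub l i j]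
  module

end Operators

theorem statement2_general (n : ℕ) (lam : ℕ → ℂ)
    (l i : ℕ) (m : ℕ) :
    zetaOp n lam l * etaOp n i ^ m - etaOp n i ^ m * zetaOp n lam l
      = (-(m : ℂ) * cartan l i) • etaOp n i ^ m := by
  rw [← Ring.lie_def, Ring.lie_pow_of_lie_eq_smul (lie_zetaOp_etaOp lam l i), mul_neg, neg_mul]

/-- For `l, i ∈ {1,…,n-1}` and `m ∈ ℕ`: `[ζ_l, η_i^m] = -m · a_{l,i} · η_i^m`. -/
theorem statement2 (n : ℕ) (hn : 2 ≤ n) (lam : ℕ → ℂ)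
    (l i : ℕ) (hl1 : 1 ≤ l) (hl2 : l ≤ n - 1) (hi1 : 1 ≤ i) (hi2 : i ≤ n - 1) (m : ℕ) :
    zetaOp n lam l * etaOp n i ^ m - etaOp n i ^ m * zetaOp n lam l
      = (-(m : ℂ) * cartan l i) • etaOp n i ^ m :=
  statement2_general n lam l i m
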